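/- arXiv:2505.24491 — 2 statements merged into one kernel-verified Lean document; each statement's English description precedes it below -/
import Mathlib

section
/- Let m and N be positive integers. For every permutation α ∈ S_m, the value of the so(N)-weight system on the inverse permutation satisfies w_{so(N)}(α⁻¹) = (−1)^m · w_{so(N)}(α). -/
open scoped BigOperators

attribute [local instance 100] LieRing.ofAssociativeRing

/-- The standard generator `F i j = E_{i j} − E_{N+1−j, N+1−i}` of `so(N)`, viewed as an
`N × N` complex matrix (an element of `gl(N)`). -/
noncomputable def soF (N : ℕ) (i j : Fin N) : Matrix (Fin N) (Fin N) ℂ :=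
  Matrix.single i j 1 - Matrix.single j.rev i.rev 1

/-- The `so(N)`-weight system on a permutation `α` of `m` elements:
`w_{so(N)}(α) = ∑_{i : Fin m → Fin N} ι(F_{i 1, i (α 1)}) ⋯ ι(F_{i m, i (α m)})`,
an element of the universal enveloping algebra of `gl(N)`. -/
noncomputable def wso (m N : ℕ) (α : Equiv.Perm (Fin m)) :
    UniversalEnvelopingAlgebra ℂ (Matrix (Fin N) (Fin N) ℂ) :=
  ∑ i : Fin m → Fin N,
    ((List.finRange m).map fun k =>
      UniversalEnvelopingAlgebra.ι ℂ (soF N (i k) (i (α k)))).prod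

open UniversalEnvelopingAlgebra

lemma soF_rev_rev (N : ℕ) (i j : Fin N) : soF N j.rev i.rev = -soF N i j := by
  simp [soF, neg_sub]

lemma List.prod_map_neg_apply {M ι : Type*} [Monoid M] [HasDistribNeg M] (l : List ι)
    (f : ι → M) : (l.map fun a => -f a).prod = (-1) ^ l.length * (l.map f).prod := by
  simpa [Function.comp_def] using (l.map f).prod_map_neg

/- Substituting `i ↦ rev ∘ i ∘ α⁻¹` in the sum defining `wso m N α⁻¹` turns every factor
`F_{i k, i (α⁻¹ k)}` into `F_{rev i (α⁻¹ k), rev i k} = -F_{i k, i (α⁻¹ k)}`. -/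
theorem wso_inv_general (m N : ℕ) (α : Equiv.Perm (Fin m)) :
    wso m N α⁻¹ = ((-1 : ℂ) ^ m) • wso m N α := by
  rw [wso, wso, Finset.smul_sum]
  refine Fintype.sum_equiv (α.arrowCongr Fin.revPerm) _ _ fun i => ?_
  have factor_neg : ∀ k, ι ℂ (soF N (i k) (i (α⁻¹ k))) =
      -ι ℂ (soF N ((α.arrowCongr Fin.revPerm i) k) ((α.arrowCongr Fin.revPerm i) (α k))) := by
    intro k
    simp [soF_rev_rev, Equiv.Perm.inv_def]
  simp only [factor_neg]
  rw [List.prod_map_neg_apply, List.length_finRange,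
    Algebra.smul_def, map_pow, map_neg, map_one]

/-- The value of the `so(N)`-weight system on the inverse permutation:
`w_{so(N)}(α⁻¹) = (−1)^m · w_{so(N)}(α)`. -/
theorem wso_inv (m N : ℕ) (hm : 0 < m) (hN : 0 < N) (α : Equiv.Perm (Fin m)) :
    wso m N α⁻¹ = ((-1 : ℂ) ^ m) • wso m N α :=
  wso_inv_general m N α
end

section
/- Let d_m denote the number of orbits of the conjugation action of the cyclic group ⟨σ⟩ on the set of cyclic permutations of m elements (σ being the standard long cycle in S_m). Then the lower bound (m−1)!/m is asymptotically sharp: the ratio d_m · m / (m−1)! tends to 1 as m → ∞. -/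
open scoped BigOperators

/-- Rotational equivalence on cyclic permutations of `m` elements: `α₁ ∼ α₂` iff
`α₂ = σ^{−k} α₁ σ^{k}` for some integer `k`, where `σ = finRotate m` is the standard
long cycle.  The classes are the orbits of the conjugation action of `⟨σ⟩` on the set of
`m`-cycles in `S_m`. -/
def rotSetoid (m : ℕ) :
    Setoid {α : Equiv.Perm (Fin m) // α.IsCycle ∧ α.support.card = m} where
  r a b := ∃ k : ℤ,
    (b : Equiv.Perm (Fin m)) = (finRotate m) ^ (-k) * (a : Equiv.Perm (Fin m)) * (finRotate m) ^ k
  iseqv := by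
    constructor
    · intro a; exact ⟨0, by simp⟩
    · rintro a b ⟨k, hk⟩
      exact ⟨-k, by rw [hk]; group⟩
    · rintro a b c ⟨k, hk⟩ ⟨l, hl⟩
      exact ⟨k + l, by rw [hl, hk]; group⟩

/-- The number of orbits of the conjugation action of `⟨σ⟩` on the set of cyclic
permutations of `m` elements; this is the dimension of the space `H_{m¹}`. -/
noncomputable def cyclicOrbitCount (m : ℕ) : ℕ :=
  Nat.card (Quotient (rotSetoid m))

/-!
By Burnside's lemma, `d_m · m = ∑_{k < m} #{m-cycles commuting with σ^k}`. The term `k = 0`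
counts all `(m-1)!` cycles, which gives the lower bound. For `0 < k < m` the power `σ^k` has no
fixed points, so all its cycles have length at least `2`, and the formula for the order of a
centralizer in `S_m` bounds its centralizer by `2^m · ⌊m/2⌋!`. Since
`m · 2^m · ⌊m/2⌋! = o((m-1)!)`, the remaining `m - 1` terms are negligible.
-/

open Equiv Equiv.Perm Finset Filter Topology Nat

namespace Equiv.Perm

variable {α : Type*} [Fintype α] [DecidableEq α]

theorem nat_card_centralizer_le_of_support_eq_univ {g : Perm α} (hg : g.support = univ) :
    Nat.card (Subgroup.centralizer {g}) ≤ 2 ^ Fintype.card α * (Fintype.card α / 2)! := by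
  set c := g.cycleType
  have hsum : c.sum = Fintype.card α := by rw [sum_cycleType, hg, Finset.card_univ]
  have hprod : c.prod ≤ 2 ^ c.sum := by
    induction c using Multiset.induction_on with
    | empty => simp
    | cons a s ih =>
      rw [Multiset.prod_cons, Multiset.sum_cons, pow_add]
      exact Nat.mul_le_mul Nat.lt_two_pow_self.le ih
  have hcard : 2 * Multiset.card c ≤ c.sum := by
    simpa [mul_comm] using Multiset.card_nsmul_le_sum fun a ha => two_le_of_mem_cycleType ha
  have hcount : ∏ n ∈ c.toFinset, (c.count n)! ≤ (Multiset.card c)! := by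
    rw [← Multiset.toFinset_sum_count_eq]
    exact Nat.le_of_dvd (factorial_pos _) (prod_factorial_dvd_factorial_sum _ _)
  rw [nat_card_centralizer, hsum, Nat.sub_self, factorial_zero, one_mul, ← hsum]
  exact Nat.mul_le_mul hprod (hcount.trans (factorial_le (by omega)))

theorem IsCycle.support_eq_of_mem_zpowers {f g : Perm α} (hf : f.IsCycle)
    (hg : g ∈ Subgroup.zpowers f) (hg1 : g ≠ 1) : g.support = f.support := by
  obtain ⟨n, hn, rfl⟩ := Finset.mem_image.mp (mem_zpowers_iff_mem_range_orderOf.mp hg)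
  have hn0 : n ≠ 0 := by rintro rfl; exact hg1 (pow_zero f)
  exact hf.support_pow_of_pos_of_lt_orderOf (Nat.pos_of_ne_zero hn0) (Finset.mem_range.mp hn)

theorem cycleType_eq_singleton_iff {g : Perm α} {n : ℕ} :
    g.cycleType = {n} ↔ g.IsCycle ∧ #g.support = n := by
  constructor
  · intro h
    refine ⟨card_cycleType_eq_one.mp (by simp [h]), ?_⟩
    rw [← sum_cycleType, h, Multiset.sum_singleton]
  · rintro ⟨hg, rfl⟩
    exact hg.cycleType

theorem nat_card_isCycle_card_support_eq_card {n : ℕ} (hn : Fintype.card α = n) (h2 : 2 ≤ n) :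
    Nat.card {g : Perm α // g.IsCycle ∧ #g.support = n} = (n - 1)! := by
  subst hn
  simp_rw [← cycleType_eq_singleton_iff]
  rw [Nat.card_eq_fintype_card, Fintype.card_subtype, card_of_cycleType_singleton h2 le_rfl,
    Nat.choose_self, mul_one]

instance (n : ℕ) : MulAction (Perm α) {g : Perm α // g.IsCycle ∧ #g.support = n} where
  smul h g := ⟨h * g * h⁻¹, g.2.1.conj, (card_support_conj ..).trans g.2.2⟩
  one_smul g := Subtype.ext (by change 1 * _ * 1⁻¹ = _; simp)
  mul_smul h k g := Subtype.ext (by change h * k * _ * (h * k)⁻¹ = h * (k * _ * k⁻¹) * h⁻¹; group)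

@[simp]
theorem coe_smul_cycle {n : ℕ} (h : Perm α) (g : {g : Perm α // g.IsCycle ∧ #g.support = n}) :
    ((h • g : {g : Perm α // g.IsCycle ∧ #g.support = n}) : Perm α) = h * g * h⁻¹ :=
  rfl

theorem nat_card_fixedBy_cycle_le {n : ℕ} (h : Perm α) :
    Nat.card (MulAction.fixedBy {g : Perm α // g.IsCycle ∧ #g.support = n} h) ≤
      Nat.card (Subgroup.centralizer {h}) := by
  refine Nat.card_le_card_of_injective (fun g => ⟨g.1.1, ?_⟩) fun g g' hgg' => ?_
  · have := congrArg Subtype.val g.2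
    rw [Subgroup.mem_centralizer_singleton_iff]
    simp only [coe_smul_cycle, mul_inv_eq_iff_eq_mul] at this
    exact this.symm
  · exact Subtype.ext (Subtype.ext (congrArg Subtype.val hgg' :))

end Equiv.Perm

theorem rotSetoid_eq_orbitRel (m : ℕ) :
    rotSetoid m = MulAction.orbitRel (Subgroup.zpowers (finRotate m))
      {α : Perm (Fin m) // α.IsCycle ∧ α.support.card = m} := by
  ext a b
  rw [MulAction.orbitRel_apply, MulAction.mem_orbit_iff]
  constructor
  · rintro ⟨k, hk⟩
    refine ⟨⟨finRotate m ^ k, k, rfl⟩, Subtype.ext ?_⟩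
    change finRotate m ^ k * b * (finRotate m ^ k)⁻¹ = a
    rw [hk]
    group
  · rintro ⟨⟨_, k, rfl⟩, rfl⟩
    refine ⟨k, ?_⟩
    change _ = _ * (finRotate m ^ k * b * (finRotate m ^ k)⁻¹) * _
    group

theorem nat_card_zpowers_finRotate {m : ℕ} (hm : 2 ≤ m) :
    Nat.card (Subgroup.zpowers (finRotate m)) = m := by
  rw [Nat.card_zpowers, (isCycle_finRotate_of_le hm).orderOf, support_finRotate_of_le hm,
    Finset.card_univ, Fintype.card_fin]

theorem cyclicOrbitCount_mul_eq {m : ℕ} (hm : 2 ≤ m) :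
    cyclicOrbitCount m * m = (m - 1)! + ∑ g ∈ ({1}ᶜ : Finset (Subgroup.zpowers (finRotate m))),
      Nat.card (MulAction.fixedBy {α : Perm (Fin m) // α.IsCycle ∧ α.support.card = m} g) := by
  classical
  have burnside := MulAction.sum_card_fixedBy_eq_card_orbits_mul_card_group
    (Subgroup.zpowers (finRotate m)) {α : Perm (Fin m) // α.IsCycle ∧ α.support.card = m}
  simp only [← Nat.card_eq_fintype_card, nat_card_zpowers_finRotate hm] at burnside
  rw [Fintype.sum_eq_add_sum_compl 1, MulAction.fixedBy_one_eq_univ, Nat.card_univ,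
    nat_card_isCycle_card_support_eq_card (Fintype.card_fin m) hm,
    ← rotSetoid_eq_orbitRel] at burnside
  rw [cyclicOrbitCount, ← burnside]

theorem factorial_pred_le_cyclicOrbitCount_mul {m : ℕ} (hm : 2 ≤ m) :
    (m - 1)! ≤ cyclicOrbitCount m * m :=
  (cyclicOrbitCount_mul_eq hm).symm ▸ Nat.le_add_right _ _

theorem nat_card_fixedBy_le_of_mem_zpowers_finRotate {m : ℕ} (hm : 2 ≤ m)
    {g : Subgroup.zpowers (finRotate m)} (hg : g ≠ 1) :
    Nat.card (MulAction.fixedBy {α : Perm (Fin m) // α.IsCycle ∧ α.support.card = m} g) ≤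
      2 ^ m * (m / 2)! := by
  have hsupp : (g : Perm (Fin m)).support = univ := by
    rw [(isCycle_finRotate_of_le hm).support_eq_of_mem_zpowers g.2 (by simpa using hg),
      support_finRotate_of_le hm]
  calc _ ≤ Nat.card (Subgroup.centralizer {(g : Perm (Fin m))}) := nat_card_fixedBy_cycle_le _
    _ ≤ 2 ^ m * (m / 2)! := by
      simpa using nat_card_centralizer_le_of_support_eq_univ hsupp

theorem cyclicOrbitCount_mul_le {m : ℕ} (hm : 2 ≤ m) :
    cyclicOrbitCount m * m ≤ (m - 1)! + m * (2 ^ m * (m / 2)!) := by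
  classical
  rw [cyclicOrbitCount_mul_eq hm]
  gcongr
  calc _ ≤ #({1}ᶜ : Finset (Subgroup.zpowers (finRotate m))) • (2 ^ m * (m / 2)!) :=
        Finset.sum_le_card_nsmul _ _ _ fun g hg =>
          nat_card_fixedBy_le_of_mem_zpowers_finRotate hm (by simpa using hg)
    _ ≤ m * (2 ^ m * (m / 2)!) := by
      rw [smul_eq_mul, Finset.card_compl, ← Nat.card_eq_fintype_card,
        nat_card_zpowers_finRotate hm]
      gcongr
      exact Nat.sub_le _ _

namespace Nat

theorem factorial_div_two_mul_self_le (m : ℕ) : (m / 2)! * (m / 2)! ≤ m ! :=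
  (Nat.le_of_dvd (factorial_pos _) (factorial_mul_factorial_dvd_factorial_add _ _)).trans
    (factorial_le (by omega))

theorem sq_mul_two_pow_le (m : ℕ) : m ^ 2 * 2 ^ m ≤ 8 * 64 ^ (m / 2) :=
  calc m ^ 2 * 2 ^ m ≤ (2 ^ m) ^ 2 * 2 ^ m := by gcongr; exact Nat.lt_two_pow_self.le
    _ = 8 ^ m := by rw [← pow_succ, ← pow_mul, mul_comm, pow_mul]; norm_num
    _ ≤ 8 ^ (2 * (m / 2) + 1) := Nat.pow_le_pow_right (by norm_num) (by omega)
    _ = 8 * 64 ^ (m / 2) := by rw [pow_succ, pow_mul]; ring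

end Nat

theorem tendsto_mul_two_pow_mul_factorial_div_two_div_factorial :
    Tendsto (fun m : ℕ => ((m * (2 ^ m * (m / 2)!) : ℕ) : ℝ) / ((m - 1)! : ℝ)) atTop (𝓝 0) := by
  have hlim : Tendsto (fun m : ℕ => 8 * ((64 : ℝ) ^ (m / 2) / ((m / 2)! : ℝ))) atTop (𝓝 0) := by
    simpa using ((FloorSemiring.tendsto_pow_div_factorial_atTop (64 : ℝ)).comp
      (Nat.tendsto_div_const_atTop two_ne_zero)).const_mul 8
  refine squeeze_zero' (Eventually.of_forall fun m => by positivity) ?_ hlim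
  filter_upwards [eventually_ge_atTop 1] with m hm
  have key : m * (2 ^ m * (m / 2)!) * (m / 2)! ≤ 8 * 64 ^ (m / 2) * (m - 1)! := by
    refine Nat.le_of_mul_le_mul_left ?_ hm
    calc _ = m ^ 2 * 2 ^ m * ((m / 2)! * (m / 2)!) := by ring
      _ ≤ 8 * 64 ^ (m / 2) * m ! :=
        Nat.mul_le_mul (sq_mul_two_pow_le m) (factorial_div_two_mul_self_le m)
      _ = m * (8 * 64 ^ (m / 2) * (m - 1)!) := by rw [← mul_factorial_pred (by omega)]; ring
  rw [← mul_div_assoc, div_le_div_iff₀ (by positivity) (by positivity)]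
  exact_mod_cast key

/-- The lower bound `(m−1)!/m ≤ d_m` is asymptotically sharp:
`d_m · m / (m−1)! → 1` as `m → ∞`. -/
theorem cyclicOrbitCount_asymptotic :
    Filter.Tendsto
      (fun m : ℕ => ((cyclicOrbitCount m * m : ℕ) : ℝ) / (Nat.factorial (m - 1) : ℝ))
      Filter.atTop (nhds 1) := by
  have hupper := tendsto_mul_two_pow_mul_factorial_div_two_div_factorial.const_add 1
  rw [add_zero] at hupper
  refine tendsto_of_tendsto_of_tendsto_of_le_of_le' tendsto_const_nhds hupper ?_ ?_
  · filter_upwards [eventually_ge_atTop 2] with m hm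
    rw [le_div_iff₀ (by positivity), one_mul]
    exact_mod_cast factorial_pred_le_cyclicOrbitCount_mul hm
  · filter_upwards [eventually_ge_atTop 2] with m hm
    rw [one_add_div (by positivity), div_le_div_iff_of_pos_right (by positivity)]
    exact_mod_cast cyclicOrbitCount_mul_le hm
end
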